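/- Let 0 < α < 1, η ≥ 0, and let f ∈ C¹([0,∞)) with f' bounded. Then, with μ(ξ) = |ξ|^{(2α-1)/2} and 𝔠 = sin(απ)/π, one has 𝔠 ∫_ℝ μ(ξ) φ(t,ξ) dξ = (1/Γ(1-α)) ∫₀ᵗ e^{-η(t-s)} (t-s)^{-α} f'(s) ds, where φ(t,ξ) = ∫₀ᵗ μ(ξ) f'(s) e^{-(ξ²+η)(t-s)} ds. -/

import Mathlib

/-!
Since `μ(ξ)² = |ξ|^(2α-1)` and `e^{-(ξ²+η)(t-s)} = e^{-η(t-s)} e^{-ξ²(t-s)}`, Fubini turns the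
left-hand side into `𝔠 ∫₀ᵗ e^{-η(t-s)} f'(s) ∫_ℝ |ξ|^(2α-1) e^{-ξ²(t-s)} dξ ds`, and the inner
integral is `Γ(α) (t-s)^(-α)`. Fubini applies because `(t-s)^(-α)` is integrable on `(0,t)` for
`α < 1` and `e^{-η(t-s)} f'(s)` is continuous, hence bounded, on `[0,t]`. Finally the reflection
formula gives `𝔠 Γ(α) = 1 / Γ(1-α)`.
-/

open MeasureTheory Real intervalIntegral Set

theorem integrable_abs_rpow_mul_exp_neg_mul_sq {b s : ℝ} (hb : 0 < b) (hs : -1 < s) :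
    Integrable fun ξ : ℝ => |ξ| ^ s * exp (-b * ξ ^ 2) := by
  have hIoi : IntegrableOn (fun ξ : ℝ => |ξ| ^ s * exp (-b * ξ ^ 2)) (Ioi 0) :=
    (integrableOn_rpow_mul_exp_neg_mul_sq hb hs).congr_fun
      (fun x hx => by rw [abs_of_pos hx]) measurableSet_Ioi
  have hIic : IntegrableOn (fun ξ : ℝ => |ξ| ^ s * exp (-b * ξ ^ 2)) (Iic 0) := by
    rw [← (Measure.measurePreserving_neg (volume : Measure ℝ)).integrableOn_comp_preimage
      (Homeomorph.neg ℝ).measurableEmbedding]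
    simp only [Function.comp_def, abs_neg, neg_sq, neg_preimage, neg_Iic, neg_zero]
    exact (integrableOn_Ici_iff_integrableOn_Ioi).mpr hIoi
  simpa only [Iic_union_Ioi, integrableOn_univ] using hIic.union hIoi

theorem integral_abs_rpow_mul_exp_neg_mul_sq {b α : ℝ} (hb : 0 < b) (hα : 0 < α) :
    ∫ ξ : ℝ, |ξ| ^ (2 * α - 1) * exp (-b * ξ ^ 2) = Gamma α * b ^ (-α) := by
  have h := integral_comp_abs (f := fun x : ℝ => x ^ (2 * α - 1) * exp (-b * x ^ (2 : ℝ)))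
  simp only [rpow_two, sq_abs] at h
  have hIoi := integral_rpow_mul_exp_neg_mul_rpow two_pos (by linarith : -1 < 2 * α - 1) hb
  simp only [rpow_two] at hIoi
  rw [h, hIoi, show -(2 * α - 1 + 1) / 2 = -α by ring, show (2 * α - 1 + 1) / 2 = α by ring]
  ring

theorem sin_mul_pi_div_pi_mul_Gamma {α : ℝ} (hα0 : 0 < α) (hα1 : α < 1) :
    sin (α * π) / π * Gamma α = 1 / Gamma (1 - α) := by
  have hsin : sin (π * α) ≠ 0 :=
    (sin_pos_of_pos_of_lt_pi (by positivity) (by nlinarith [pi_pos])).ne'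
  have hΓ : Gamma (1 - α) ≠ 0 := (Gamma_pos_of_pos (by linarith)).ne'
  rw [mul_comm α π, eq_div_iff hΓ, mul_assoc, Gamma_mul_Gamma_one_sub]
  field_simp

theorem integrableOn_sub_rpow_neg_Ioo {α t : ℝ} (hα : α < 1) (ht : 0 ≤ t) :
    IntegrableOn (fun s : ℝ => (t - s) ^ (-α)) (Ioo 0 t) := by
  have h := ((intervalIntegrable_rpow' (by linarith : -1 < -α)).comp_sub_left t :
    IntervalIntegrable (fun s : ℝ => (t - s) ^ (-α)) volume (t - t) (t - 0))
  rwa [sub_self, sub_zero, intervalIntegrable_iff_integrableOn_Ioo_of_le ht] at h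

theorem integral_abs_rpow_mul_integral_mul_exp_neg_mul_sq {α t : ℝ} (hα0 : 0 < α) (hα1 : α < 1)
    (ht : 0 ≤ t) {g : ℝ → ℝ} (hg : ContinuousOn g (Icc 0 t)) :
    ∫ ξ : ℝ, |ξ| ^ (2 * α - 1) * ∫ s in (0 : ℝ)..t, g s * exp (-(t - s) * ξ ^ 2) =
      Gamma α * ∫ s in (0 : ℝ)..t, (t - s) ^ (-α) * g s := by
  set K : ℝ → ℝ → ℝ := fun ξ s => |ξ| ^ (2 * α - 1) * exp (-(t - s) * ξ ^ 2) with hK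
  have hK_integral : ∀ s ∈ Ioo 0 t, ∫ ξ, K ξ s = Gamma α * (t - s) ^ (-α) := fun s hs =>
    integral_abs_rpow_mul_exp_neg_mul_sq (sub_pos.mpr hs.2) hα0
  have hK_nonneg : ∀ ξ s, 0 ≤ K ξ s := fun ξ s => by positivity
  have hmem : ∀ᵐ s ∂volume.restrict (Ioo 0 t), s ∈ Ioo 0 t := ae_restrict_mem measurableSet_Ioo
  have hInt : Integrable (Function.uncurry fun ξ s => g s * K ξ s)
      ((volume : Measure ℝ).prod (volume.restrict (Ioo 0 t))) := by
    have hmeas : AEStronglyMeasurable (Function.uncurry fun ξ s => g s * K ξ s)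
        ((volume : Measure ℝ).prod (volume.restrict (Ioo 0 t))) := by
      have hg_meas : AEStronglyMeasurable (fun p : ℝ × ℝ => g p.2)
          ((volume : Measure ℝ).prod (volume.restrict (Ioo 0 t))) :=
        ((hg.mono Ioo_subset_Icc_self).aestronglyMeasurable measurableSet_Ioo).comp_snd
      have hK_meas : Measurable (Function.uncurry K) := by simp only [hK]; fun_prop
      exact hg_meas.mul hK_meas.aestronglyMeasurable
    refine (integrable_prod_iff' hmeas).mpr ⟨?_, ?_⟩
    · filter_upwards [hmem] with s hs
      exact (integrable_abs_rpow_mul_exp_neg_mul_sq (sub_pos.mpr hs.2)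
        (by linarith : -1 < 2 * α - 1)).const_mul (g s)
    · have hbound : IntegrableOn (fun s => ‖g s‖ * (Gamma α * (t - s) ^ (-α))) (Ioo 0 t) :=
        IntegrableOn.continuousOn_mul_of_subset hg.norm
          ((integrableOn_sub_rpow_neg_Ioo hα1 ht).const_mul _) isCompact_Icc measurableSet_Ioo
          Ioo_subset_Icc_self
      refine hbound.congr_fun_ae ?_
      filter_upwards [hmem] with s hs
      simp only [Function.uncurry_apply_pair, norm_mul, Real.norm_of_nonneg (hK_nonneg _ s),
        MeasureTheory.integral_const_mul, hK_integral s hs]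
  calc ∫ ξ : ℝ, |ξ| ^ (2 * α - 1) * ∫ s in (0 : ℝ)..t, g s * exp (-(t - s) * ξ ^ 2)
      = ∫ ξ, ∫ s in Ioo 0 t, g s * K ξ s := by
        congr 1 with ξ
        rw [integral_of_le ht, integral_Ioc_eq_integral_Ioo, ← MeasureTheory.integral_const_mul]
        congr 1 with s
        ring
    _ = ∫ s in Ioo 0 t, ∫ ξ, g s * K ξ s := integral_integral_swap hInt
    _ = ∫ s in Ioo 0 t, Gamma α * ((t - s) ^ (-α) * g s) := by
        refine setIntegral_congr_fun measurableSet_Ioo fun s hs => ?_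
        simp only [MeasureTheory.integral_const_mul, hK_integral s hs]
        ring
    _ = Gamma α * ∫ s in (0 : ℝ)..t, (t - s) ^ (-α) * g s := by
        rw [MeasureTheory.integral_const_mul, integral_of_le ht, integral_Ioc_eq_integral_Ioo]

theorem stmt_7_general (α η : ℝ) (hα0 : 0 < α) (hα1 : α < 1)
    (f : ℝ → ℝ) (hf : ContDiff ℝ 1 f)
    (φ : ℝ → ℝ → ℝ)
    (hφ : ∀ t ξ, φ t ξ =
      ∫ s in (0 : ℝ)..t, |ξ| ^ ((2 * α - 1) / 2) * deriv f s * Real.exp (-(ξ ^ 2 + η) * (t - s))) :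
    ∀ t : ℝ, 0 ≤ t →
      (Real.sin (α * π) / π) * ∫ ξ : ℝ, |ξ| ^ ((2 * α - 1) / 2) * φ t ξ =
        (1 / Real.Gamma (1 - α)) *
          ∫ s in (0 : ℝ)..t, Real.exp (-η * (t - s)) * (t - s) ^ (-α) * deriv f s := by
  intro t ht
  have hg : Continuous fun s => exp (-η * (t - s)) * deriv f s := by
    have := hf.continuous_deriv le_rfl
    fun_prop
  have hμφ : ∀ ξ : ℝ, |ξ| ^ ((2 * α - 1) / 2) * φ t ξ = |ξ| ^ (2 * α - 1) *
      ∫ s in (0 : ℝ)..t, exp (-η * (t - s)) * deriv f s * exp (-(t - s) * ξ ^ 2) := by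
    intro ξ
    have hμ_sq : |ξ| ^ (2 * α - 1) = |ξ| ^ ((2 * α - 1) / 2) * |ξ| ^ ((2 * α - 1) / 2) := by
      rw [← sq, ← rpow_mul_natCast (abs_nonneg ξ)]
      norm_num
    rw [hφ, hμ_sq, ← intervalIntegral.integral_const_mul, ← intervalIntegral.integral_const_mul]
    congr 1 with s
    rw [show -(ξ ^ 2 + η) * (t - s) = -η * (t - s) + -(t - s) * ξ ^ 2 by ring, exp_add]
    ring
  simp_rw [hμφ]
  rw [integral_abs_rpow_mul_integral_mul_exp_neg_mul_sq hα0 hα1 ht hg.continuousOn, ← mul_assoc,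
    sin_mul_pi_div_pi_mul_Gamma hα0 hα1]
  congr 2 with s
  ring

theorem stmt_7 (α η : ℝ) (hα0 : 0 < α) (hα1 : α < 1) (hη : 0 ≤ η)
    (f : ℝ → ℝ) (hf : ContDiff ℝ 1 f) (C : ℝ) (hf' : ∀ s, |deriv f s| ≤ C)
    (φ : ℝ → ℝ → ℝ)
    (hφ : ∀ t ξ, φ t ξ =
      ∫ s in (0 : ℝ)..t, |ξ| ^ ((2 * α - 1) / 2) * deriv f s * Real.exp (-(ξ ^ 2 + η) * (t - s))) :
    ∀ t : ℝ, 0 ≤ t →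
      (Real.sin (α * π) / π) * ∫ ξ : ℝ, |ξ| ^ ((2 * α - 1) / 2) * φ t ξ =
        (1 / Real.Gamma (1 - α)) *
          ∫ s in (0 : ℝ)..t, Real.exp (-η * (t - s)) * (t - s) ^ (-α) * deriv f s :=
  stmt_7_general α η hα0 hα1 f hf φ hφ
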